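/- Pf_3(A^6) = 10 and Pf_4(A^8) = 35: for k = 2, Pf_m(A^{2m}) = C(2m−1, m). -/

import Mathlib

open Equiv Finset Function

/-- The `r`-th element of the `i`-th block of length `m` in `{0, …, m*n-1}`. -/
def idx (m n : ℕ) (i : Fin n) (r : Fin m) : Fin (m * n) :=
  ⟨i.val * m + r.val, by
    have h1 : i.val * m + m = (i.val + 1) * m := by ring
    have h2 : (i.val + 1) * m ≤ n * m := Nat.mul_le_mul_right m i.isLt
    have h3 : n * m = m * n := Nat.mul_comm n m
    omega⟩

/-- A permutation of `{0, …, m*n-1}` is block-increasing if it is strictly increasing on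
each of the `n` consecutive blocks of length `m`. -/
def BlockIncr (m n : ℕ) (σ : Equiv.Perm (Fin (m * n))) : Prop :=
  ∀ (i : Fin n) (r r' : Fin m), r < r' → σ (idx m n i r) < σ (idx m n i r')

instance (m n : ℕ) : DecidablePred (BlockIncr m n) := fun σ => by
  unfold BlockIncr; infer_instance

/-- The generalized pfaffian `Pf_m` of a tensor with `m*k` indices (grouped in `k` groups of
`m`), each ranging over `{0, …, m*n-1}`:
`(1/n!) Σ ε(σ_1)⋯ε(σ_k) Π_{i=1}^n M_{σ_1((i-1)m+1),…,σ_1(im),…,σ_k((i-1)m+1),…,σ_k(im)}`,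
the sum being over `k`-tuples of block-increasing permutations. -/
noncomputable def Pf (m k n : ℕ) (M : (Fin k → Fin m → Fin (m * n)) → ℚ) : ℚ :=
  (n.factorial : ℚ)⁻¹ *
    ∑ σ ∈ Finset.univ.filter (fun σ : Fin k → Equiv.Perm (Fin (m * n)) =>
        ∀ j, BlockIncr m n (σ j)),
      (∏ j, ((Equiv.Perm.sign (σ j) : ℤ) : ℚ)) *
        ∏ i : Fin n, M (fun j r => σ j (idx m n i r))

/-- The block number of position `t` in `{0, …, m*n-1}`. -/
def blkOf (m n : ℕ) (t : Fin (m * n)) : Fin n :=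
  ⟨t.val / m, Nat.div_lt_of_lt_mul t.isLt⟩

/-- The position within its block of position `t` in `{0, …, m*n-1}`. -/
def posOf (m n : ℕ) (t : Fin (m * n)) : Fin m :=
  ⟨t.val % m, by
    have hm : 0 < m := by
      rcases Nat.eq_zero_or_pos m with h | h
      · exact absurd t.isLt (by simp [h])
      · exact h
    exact Nat.mod_lt _ hm⟩

/-- The Levi-Civita (fully antisymmetric) tensor of order `m*k` and side `m*k`, with
indices grouped in `k` groups of `m`: its value is the sign of the sequence of indices
read as a permutation when the indices are pairwise distinct, and `0` otherwise. -/
noncomputable def levi (m k : ℕ) : (Fin k → Fin m → Fin (m * k)) → ℚ := fun f =>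
  if h : Function.Bijective (fun t : Fin (m * k) => f (blkOf m k t) (posOf m k t)) then
    ((Equiv.Perm.sign (Equiv.ofBijective _ h) : ℤ) : ℚ)
  else 0

/-- The hyperminor of `M` obtained by restricting the `s`-th group of `m` index slots to
the subset `I s` (of cardinality `m*ℓ`), with the induced order. -/
noncomputable def hyperminor {m k n : ℕ} (ℓ : ℕ) (M : (Fin k → Fin m → Fin (m * n)) → ℚ)
    (I : Fin k → Finset (Fin (m * n))) (h : ∀ s, (I s).card = m * ℓ) :
    (Fin k → Fin m → Fin (m * ℓ)) → ℚ :=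
  fun f => M fun j r => (((I j).orderIsoOfFin (h j)) (f j r)).1

/-- Row `ℓ` of the `(m,k)`-array built from column permutations `σ`: the entry in
column-group `j`, position `r` is `σ j ((ℓ-1)m + r)`. -/
def lqRow (m k : ℕ) (σ : Fin k → Equiv.Perm (Fin (m * k))) (ℓ : Fin k) :
    Fin (m * k) → Fin (m * k) :=
  fun t => σ (blkOf m k t) (idx m k ℓ (posOf m k t))

/-- `σ` determines an `(m,k)`-latin quasisquare: every column permutation `σ j` is
block-increasing and every row is a permutation of `{0, …, mk-1}` (each row is then
automatically block-increasing). -/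
def IsLQ (m k : ℕ) (σ : Fin k → Equiv.Perm (Fin (m * k))) : Prop :=
  (∀ j, BlockIncr m k (σ j)) ∧ ∀ ℓ : Fin k, Function.Bijective (lqRow m k σ ℓ)

instance (m k : ℕ) : DecidablePred (IsLQ m k) := fun σ => by
  unfold IsLQ lqRow; infer_instance

/-- The set of `(m,k)`-latin quasisquares. -/
noncomputable def LQ (m k : ℕ) : Finset (Fin k → Equiv.Perm (Fin (m * k))) :=
  Finset.univ.filter (IsLQ m k)

/-- The sign of an `(m,k)`-latin quasisquare: the product of the signs of the column
permutations `σ j` and of the signs of the rows. -/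
noncomputable def LQsign (m k : ℕ) (σ : Fin k → Equiv.Perm (Fin (m * k))) : ℚ :=
  if h : ∀ ℓ : Fin k, Function.Bijective (lqRow m k σ ℓ) then
    (∏ j, ((Equiv.Perm.sign (σ j) : ℤ) : ℚ)) *
      ∏ ℓ, ((Equiv.Perm.sign (Equiv.ofBijective _ (h ℓ)) : ℤ) : ℚ)
  else 0

/-!
A summand of `Pf_m(A^{mk})` (with `n = k`) vanishes unless the rows of the array formed by the
`k` column permutations are bijective, and then it is the sign of that latin quasisquare.
For `k = 2`, a block-increasing permutation of `{0, …, 2m-1}` is determined by the image `S` of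
its first block; the first row is bijective exactly when the second column is the first one with
its two blocks swapped, and then the two rows are the two columns, so every sign is `1`. The
quasisquares thus correspond to the `C(2m, m) = 2 C(2m-1, m)` choices of `S`.
-/

section Blocks

variable {m n : ℕ}

lemma idx_blkOf_posOf (t : Fin (m * n)) : idx m n (blkOf m n t) (posOf m n t) = t :=
  Fin.ext (Nat.div_add_mod' t m)

lemma blkOf_idx (i : Fin n) (r : Fin m) : blkOf m n (idx m n i r) = i := by
  have hm : 0 < m := r.pos
  ext
  simp [blkOf, idx, Nat.add_div_of_dvd_right (Dvd.intro_left _ rfl), Nat.div_eq_of_lt r.isLt, hm]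

lemma posOf_idx (i : Fin n) (r : Fin m) : posOf m n (idx m n i r) = r := by
  ext
  simp [posOf, idx, Nat.mod_eq_of_lt r.isLt]

lemma idx_injective (i : Fin n) : Injective (idx m n i) := fun r s h => by
  simpa only [posOf_idx] using congrArg (posOf m n) h

lemma mem_range_idx {i : Fin n} {t : Fin (m * n)} :
    t ∈ Set.range (idx m n i) ↔ blkOf m n t = i :=
  ⟨by rintro ⟨r, rfl⟩; exact blkOf_idx i r,
    fun h => ⟨posOf m n t, by rw [← h, idx_blkOf_posOf]⟩⟩

def blockRange {α : Type*} (m n : ℕ) (f : Fin (m * n) → α) (i : Fin n) : Set α :=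
  Set.range (f ∘ idx m n i)

lemma eq_of_blockRange_eq {α : Type*} [Preorder α] {f g : Fin (m * n) → α}
    (hf : ∀ i, StrictMono (f ∘ idx m n i)) (hg : ∀ i, StrictMono (g ∘ idx m n i))
    (h : ∀ i, blockRange m n f i = blockRange m n g i) : f = g := by
  funext t
  rw [← idx_blkOf_posOf t]
  exact congrFun (((hf _).range_inj (hg _)).mp (h _)) _

end Blocks

section LatinQuasisquares

variable {m k : ℕ}

lemma lqRow_comp_idx (σ : Fin k → Perm (Fin (m * k))) (ℓ j : Fin k) :
    lqRow m k σ ℓ ∘ idx m k j = σ j ∘ idx m k ℓ := by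
  funext r
  simp [lqRow, blkOf_idx, posOf_idx]

lemma blockRange_lqRow (σ : Fin k → Perm (Fin (m * k))) (ℓ j : Fin k) :
    blockRange m k (lqRow m k σ ℓ) j = blockRange m k (σ j) ℓ := by
  rw [blockRange, lqRow_comp_idx, blockRange]

lemma prod_sign_mul_prod_levi_eq_lqSign (σ : Fin k → Perm (Fin (m * k))) :
    (∏ j, ((Perm.sign (σ j) : ℤ) : ℚ)) * ∏ ℓ, levi m k (fun j r => σ j (idx m k ℓ r)) =
      LQsign m k σ := by
  unfold LQsign
  split_ifs with h
  · congr 1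
    exact prod_congr rfl fun ℓ _ => dif_pos (h ℓ)
  · obtain ⟨ℓ, hℓ⟩ := not_forall.mp h
    exact mul_eq_zero_of_right _ (prod_eq_zero (mem_univ ℓ) (dif_neg hℓ))

theorem pf_levi_eq_sum_lqSign (m k : ℕ) :
    Pf m k k (levi m k) = (k.factorial : ℚ)⁻¹ * ∑ σ ∈ LQ m k, LQsign m k σ := by
  simp only [Pf, prod_sign_mul_prod_levi_eq_lqSign]
  congr 1
  rw [LQ, sum_filter, sum_filter]
  refine sum_congr rfl fun σ _ => ?_
  split_ifs with hB hLQ hLQ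
  · rfl
  · exact dif_neg fun h => hLQ ⟨hB, h⟩
  · exact absurd hLQ.1 hB
  · rfl

end LatinQuasisquares

section TwoBlocks

variable {m : ℕ}

def halvesEquiv (m : ℕ) : Fin m ⊕ Fin m ≃ Fin (m * 2) :=
  finSumFinEquiv.trans (finCongr (mul_two m).symm)

@[simp]
lemma halvesEquiv_inl (r : Fin m) : halvesEquiv m (.inl r) = idx m 2 0 r := by
  ext; simp [halvesEquiv, idx]

@[simp]
lemma halvesEquiv_inr (r : Fin m) : halvesEquiv m (.inr r) = idx m 2 1 r := by
  ext; simp [halvesEquiv, idx, add_comm]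

lemma range_idx_one : Set.range (idx m 2 1) = (Set.range (idx m 2 0))ᶜ := by
  ext t
  simp only [Set.mem_compl_iff, mem_range_idx, Fin.ext_iff]
  have := (blkOf m 2 t).isLt
  simp only [Fin.val_zero, Fin.val_one]
  omega

lemma blockRange_one_eq_compl {α : Type*} {f : Fin (m * 2) → α} (hf : Bijective f) :
    blockRange m 2 f 1 = (blockRange m 2 f 0)ᶜ := by
  rw [blockRange, blockRange, Set.range_comp, Set.range_comp, range_idx_one,
    Set.image_compl_eq hf]

lemma BlockIncr.eq_of_blockRange_zero_eq {σ τ : Perm (Fin (m * 2))} (hσ : BlockIncr m 2 σ)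
    (hτ : BlockIncr m 2 τ) (h : blockRange m 2 σ 0 = blockRange m 2 τ 0) : σ = τ := by
  refine DFunLike.coe_injective (eq_of_blockRange_eq hσ hτ fun i => ?_)
  fin_cases i
  · exact h
  · simp only [Fin.mk_one, blockRange_one_eq_compl σ.bijective,
      blockRange_one_eq_compl τ.bijective, h]

lemma card_compl_of_card_eq {S : Finset (Fin (m * 2))} (hS : #S = m) : #Sᶜ = m := by
  rw [card_compl, Fintype.card_fin, hS]; omega

def blockPerm (S : Finset (Fin (m * 2))) (hS : #S = m) : Perm (Fin (m * 2)) :=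
  (halvesEquiv m).symm.trans (finSumEquivOfFinset hS (card_compl_of_card_eq hS))

lemma blockPerm_idx_zero {S : Finset (Fin (m * 2))} (hS : #S = m) (r : Fin m) :
    blockPerm S hS (idx m 2 0 r) = S.orderEmbOfFin hS r := by
  simp [blockPerm, ← halvesEquiv_inl]

lemma blockPerm_idx_one {S : Finset (Fin (m * 2))} (hS : #S = m) (r : Fin m) :
    blockPerm S hS (idx m 2 1 r) = Sᶜ.orderEmbOfFin (card_compl_of_card_eq hS) r := by
  simp [blockPerm, ← halvesEquiv_inr]

lemma blockIncr_blockPerm {S : Finset (Fin (m * 2))} (hS : #S = m) :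
    BlockIncr m 2 (blockPerm S hS) := by
  intro i r r' h
  fin_cases i
  · simpa [blockPerm_idx_zero] using (S.orderEmbOfFin hS).strictMono h
  · simpa [blockPerm_idx_one] using (Sᶜ.orderEmbOfFin (card_compl_of_card_eq hS)).strictMono h

lemma blockRange_blockPerm_zero {S : Finset (Fin (m * 2))} (hS : #S = m) :
    blockRange m 2 (blockPerm S hS) 0 = S := by
  rw [blockRange, comp_def]
  simp_rw [blockPerm_idx_zero]
  exact range_orderEmbOfFin S hS

theorem card_filter_blockIncr (m : ℕ) :
    #(univ.filter (BlockIncr m 2)) = (m * 2).choose m := by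
  have hcard : (m * 2).choose m = #(powersetCard m (univ : Finset (Fin (m * 2)))) := by
    rw [card_powersetCard, card_univ, Fintype.card_fin]
  rw [hcard]
  refine card_bij (fun σ _ => univ.image (σ ∘ idx m 2 0)) (fun σ _ => ?_) ?_ ?_
  · exact mem_powersetCard.mpr ⟨subset_univ _, by
      rw [card_image_of_injective _ (σ.injective.comp (idx_injective 0)), card_univ,
        Fintype.card_fin]⟩
  · intro σ hσ τ hτ h
    refine (mem_filter.mp hσ).2.eq_of_blockRange_zero_eq (mem_filter.mp hτ).2 ?_
    rwa [← coe_inj, coe_image, coe_image, coe_univ, Set.image_univ, Set.image_univ] at h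
  · intro S hS
    have hS' := (mem_powersetCard.mp hS).2
    refine ⟨blockPerm S hS', mem_filter.mpr ⟨mem_univ _, blockIncr_blockPerm hS'⟩, ?_⟩
    rw [← coe_inj, coe_image, coe_univ, Set.image_univ]
    exact blockRange_blockPerm_zero hS'

def blockSwap (m : ℕ) : Perm (Fin (m * 2)) :=
  (halvesEquiv m).permCongr (Equiv.sumComm _ _)

@[simp]
lemma blockSwap_idx_zero (r : Fin m) : blockSwap m (idx m 2 0 r) = idx m 2 1 r := by
  simp [blockSwap, Equiv.permCongr_apply, ← halvesEquiv_inl, ← halvesEquiv_inr]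

@[simp]
lemma blockSwap_idx_one (r : Fin m) : blockSwap m (idx m 2 1 r) = idx m 2 0 r := by
  simp [blockSwap, Equiv.permCongr_apply, ← halvesEquiv_inl, ← halvesEquiv_inr]

lemma blockRange_mul_blockSwap_zero (σ : Perm (Fin (m * 2))) :
    blockRange m 2 (σ * blockSwap m) 0 = blockRange m 2 σ 1 := by
  simp [blockRange, comp_def]

lemma BlockIncr.mul_blockSwap {σ : Perm (Fin (m * 2))} (hσ : BlockIncr m 2 σ) :
    BlockIncr m 2 (σ * blockSwap m) := by
  intro i r r' h
  fin_cases i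
  · simpa using hσ 1 r r' h
  · simpa using hσ 0 r r' h

def blockSwapPair (τ : Perm (Fin (m * 2))) : Fin 2 → Perm (Fin (m * 2)) :=
  ![τ, τ * blockSwap m]

lemma blockSwapPair_injective : Injective (blockSwapPair (m := m)) :=
  fun _ _ h => congrFun h 0

lemma lqRow_blockSwapPair (τ : Perm (Fin (m * 2))) (ℓ : Fin 2) :
    lqRow m 2 (blockSwapPair τ) ℓ = blockSwapPair τ ℓ := by
  funext t
  obtain ⟨j, r, rfl⟩ : ∃ j r, idx m 2 j r = t := ⟨_, _, idx_blkOf_posOf t⟩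
  rw [← comp_apply (f := lqRow m 2 _ ℓ), lqRow_comp_idx]
  fin_cases ℓ <;> fin_cases j <;> simp [blockSwapPair]

lemma isLQ_blockSwapPair {τ : Perm (Fin (m * 2))} (hτ : BlockIncr m 2 τ) :
    IsLQ m 2 (blockSwapPair τ) := by
  refine ⟨fun j => ?_, fun ℓ => ?_⟩
  · fin_cases j
    exacts [hτ, hτ.mul_blockSwap]
  · rw [lqRow_blockSwapPair]
    exact Equiv.bijective _

lemma IsLQ.eq_blockSwapPair {σ : Fin 2 → Perm (Fin (m * 2))} (h : IsLQ m 2 σ) :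
    σ = blockSwapPair (σ 0) := by
  funext j
  fin_cases j
  · rfl
  · refine (h.1 1).eq_of_blockRange_zero_eq (h.1 0).mul_blockSwap ?_
    calc blockRange m 2 (σ 1) 0 = blockRange m 2 (lqRow m 2 σ 0) 1 := (blockRange_lqRow ..).symm
      _ = (blockRange m 2 (σ 0) 0)ᶜ := by rw [blockRange_one_eq_compl (h.2 0), blockRange_lqRow]
      _ = blockRange m 2 (σ 0) 1 := (blockRange_one_eq_compl (σ 0).bijective).symm
      _ = blockRange m 2 (σ 0 * blockSwap m) 0 := (blockRange_mul_blockSwap_zero _).symm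

lemma lq_two_eq_image : LQ m 2 = (univ.filter (BlockIncr m 2)).image blockSwapPair := by
  ext σ
  simp only [LQ, mem_filter, mem_univ, true_and, mem_image]
  constructor
  · intro h
    exact ⟨σ 0, h.1 0, h.eq_blockSwapPair.symm⟩
  · rintro ⟨τ, hτ, rfl⟩
    exact isLQ_blockSwapPair hτ

lemma lqSign_blockSwapPair (τ : Perm (Fin (m * 2))) : LQsign m 2 (blockSwapPair τ) = 1 := by
  have hrow : ∀ ℓ, Bijective (lqRow m 2 (blockSwapPair τ) ℓ) := fun ℓ => by
    rw [lqRow_blockSwapPair]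
    exact Equiv.bijective _
  have hrow_eq : ∀ ℓ, ofBijective _ (hrow ℓ) = blockSwapPair τ ℓ := fun ℓ =>
    Equiv.ext (congrFun (lqRow_blockSwapPair τ ℓ))
  rw [LQsign, dif_pos hrow]
  simp_rw [hrow_eq, ← prod_mul_distrib]
  refine prod_eq_one fun j _ => ?_
  rw [← Int.cast_mul, ← Units.val_mul, Int.units_mul_self, Units.val_one, Int.cast_one]

lemma choose_mul_two_eq_two_mul_choose_sub_one (hm : 0 < m) :
    (m * 2).choose m = 2 * (2 * m - 1).choose m := by
  obtain ⟨p, rfl⟩ : ∃ p, m = p + 1 := ⟨m - 1, by omega⟩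
  rw [show (p + 1) * 2 = 2 * p + 1 + 1 by ring, show 2 * (p + 1) - 1 = 2 * p + 1 by omega,
    Nat.choose_succ_succ', Nat.choose_symm_half, ← two_mul]

theorem pf_levi_two (hm : 0 < m) : Pf m 2 2 (levi m 2) = (2 * m - 1).choose m := by
  rw [pf_levi_eq_sum_lqSign, lq_two_eq_image,
    sum_image fun τ _ τ' _ h => blockSwapPair_injective h,
    sum_congr rfl fun τ _ => lqSign_blockSwapPair τ, sum_const, card_filter_blockIncr,
    choose_mul_two_eq_two_mul_choose_sub_one hm, nsmul_one]
  push_cast [Nat.factorial]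
  ring

end TwoBlocks

/-- `Pf_3(A^6) = 10`, `Pf_4(A^8) = 35`, and in general for `k = 2`,
`Pf_m(A^{2m}) = C(2m-1, m)`. -/
theorem pf_levi_k_two :
    Pf 3 2 2 (levi 3 2) = 10 ∧ Pf 4 2 2 (levi 4 2) = 35 ∧
    ∀ m : ℕ, 0 < m → Pf m 2 2 (levi m 2) = Nat.choose (2 * m - 1) m := by
  refine ⟨?_, ?_, fun m hm => pf_levi_two hm⟩ <;> rw [pf_levi_two (by norm_num)] <;>
    norm_num [Nat.choose]
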